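/- Each of the following birational transformations maps solutions of the C3^(1) system to solutions: with the notation (*) = (x,y,z,w,t; α0,α1,α2,α3), S0: (*) ↦ (−(x+α0/y+1/y²), −y, √(−1)·z, w/√(−1), −t; −α0, α1+α0, α2, α3); S1: (*) ↦ (x, y−α1/x, z, w, t; α0+2α1, −α1, α2+α1, α3); S2: (*) ↦ (x+α2/(y+w²−t), y, z+2α2w/(y+w²−t), w, t; α0, α1+α2, −α2, α3+2α2); S3: (*) ↦ (x, y, z, w−α3/z, t; α0, α1, α2+α3, −α3). Precisely: if (x(t),y(t),z(t),w(t)) is a differentiable solution of the C3^(1) system with parameters (α0,α1,α2,α3) on an open set where t ≠ 0 and the relevant denominators (y, x, y+w²−t, z respectively) do not vanish, then each transformed tuple solves the C3^(1) system with the transformed parameters (for S0, the transformed functions are regarded as functions of the new time −t). These transformations generate the affine Weyl group of type C3^(1). -/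

import Mathlib

/-!
Each `Sᵢ` is a birational change of the dependent variables (for `S₀` also of time `t ↦ -t`).
Where its denominators do not vanish, the chain rule shows that the transformed functions are
differentiable, and their derivatives agree with the Hamiltonian vector field of the transformed
Hamiltonian by an identity of rational functions in `x, y, z, w, t`. For `S₂` this identity holds
only on the hyperplane `α₀ + 2α₁ + 2α₂ + α₃ = 1`; for `S₀` it uses `√-1 ² = -1`, which absorbs the
sign change of `dt`.
-/

open Complex

noncomputable def HC3 (a0 a1 a2 a3 : ℂ) (t x y z w : ℂ) : ℂ :=
  (x^2*y^3 - (t*x + 2*a1 + a2 + a3)*x*y^2 - ((a0*t - 1)*x - a1*(a1+a2+a3))*y - t*x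
    - z^2*w^4/4 + (a3/2)*z*w^3 + (1/4)*(2*t*z^2 - a3^2)*w^2
    - (1/2)*((a3+1)*t - 1)*z*w - t^2*z^2/4
    + (x*y - a1)*y*z*w) / t^2

noncomputable def pdX (H : ℂ → ℂ → ℂ → ℂ → ℂ → ℂ) (t x y z w : ℂ) : ℂ :=
  deriv (fun s => H t s y z w) x

noncomputable def pdY (H : ℂ → ℂ → ℂ → ℂ → ℂ → ℂ) (t x y z w : ℂ) : ℂ :=
  deriv (fun s => H t x s z w) y

noncomputable def pdZ (H : ℂ → ℂ → ℂ → ℂ → ℂ → ℂ) (t x y z w : ℂ) : ℂ :=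
  deriv (fun s => H t x y s w) z

noncomputable def pdW (H : ℂ → ℂ → ℂ → ℂ → ℂ → ℂ) (t x y z w : ℂ) : ℂ :=
  deriv (fun s => H t x y z s) w

def IsSol (H : ℂ → ℂ → ℂ → ℂ → ℂ → ℂ) (U : Set ℂ) (x y z w : ℂ → ℂ) : Prop :=
  ∀ t ∈ U,
    HasDerivAt x (pdY H t (x t) (y t) (z t) (w t)) t ∧
    HasDerivAt y (-(pdX H t (x t) (y t) (z t) (w t))) t ∧
    HasDerivAt z (pdW H t (x t) (y t) (z t) (w t)) t ∧
    HasDerivAt w (-(pdZ H t (x t) (y t) (z t) (w t))) t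

theorem deriv_quartic {𝕜 : Type*} [NontriviallyNormedField 𝕜] (c₄ c₃ c₂ c₁ c₀ u : 𝕜) :
    deriv (fun s => c₄*s^4 + c₃*s^3 + c₂*s^2 + c₁*s + c₀) u
      = 4*c₄*u^3 + 3*c₃*u^2 + 2*c₂*u + c₁ := by
  have h : HasDerivAt (fun s => c₄*s^4 + c₃*s^3 + c₂*s^2 + c₁*s + c₀)
      (c₄ * (↑4 * u ^ (4 - 1)) + c₃ * (↑3 * u ^ (3 - 1)) + c₂ * (↑2 * u ^ (2 - 1)) + c₁ * 1) u :=
    (((((hasDerivAt_pow 4 u).const_mul c₄).add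
      ((hasDerivAt_pow 3 u).const_mul c₃)).add
      ((hasDerivAt_pow 2 u).const_mul c₂)).add
      ((hasDerivAt_id u).const_mul c₁)).add_const c₀
  rw [h.deriv]
  push_cast
  ring

theorem HasDerivAt.comp_neg {𝕜 : Type*} [NontriviallyNormedField 𝕜]
    {F : Type*} [NormedAddCommGroup F] [NormedSpace 𝕜 F]
    {f : 𝕜 → F} {f' : F} {t : 𝕜} (hf : HasDerivAt f f' t) :
    HasDerivAt (fun T => f (-T)) (-f') (-t) :=
  (hf.scomp_of_eq (-t) (hasDerivAt_neg' (-t)) (neg_neg t).symm).congr_deriv (neg_one_smul 𝕜 f')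

section PartialDerivatives

variable (a0 a1 a2 a3 t x y z w : ℂ)

theorem pdX_HC3 :
    pdX (HC3 a0 a1 a2 a3) t x y z w
      = (2*x*y^3 - 2*t*x*y^2 - (2*a1+a2+a3)*y^2 - (a0*t-1)*y - t + y^2*z*w)/t^2 := by
  unfold pdX
  rw [show (fun s => HC3 a0 a1 a2 a3 t s y z w)
      = fun s => 0*s^4 + 0*s^3 + ((y^3 - t*y^2)/t^2)*s^2
        + ((-(2*a1+a2+a3)*y^2 - (a0*t-1)*y - t + y^2*z*w)/t^2)*s
        + ((a1*(a1+a2+a3)*y - z^2*w^4/4 + (a3/2)*z*w^3 + (1/4)*(2*t*z^2-a3^2)*w^2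
            - (1/2)*((a3+1)*t-1)*z*w - t^2*z^2/4 - a1*y*z*w)/t^2)
      from funext fun s => by simp only [HC3]; ring]
  rw [deriv_quartic]; ring

theorem pdY_HC3 :
    pdY (HC3 a0 a1 a2 a3) t x y z w
      = (3*x^2*y^2 - 2*(t*x+2*a1+a2+a3)*x*y - ((a0*t-1)*x - a1*(a1+a2+a3))
          + 2*x*y*z*w - a1*z*w)/t^2 := by
  unfold pdY
  rw [show (fun s => HC3 a0 a1 a2 a3 t x s z w)
      = fun s => 0*s^4 + (x^2/t^2)*s^3 + ((-(t*x+2*a1+a2+a3)*x + x*z*w)/t^2)*s^2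
        + ((-((a0*t-1)*x - a1*(a1+a2+a3)) - a1*z*w)/t^2)*s
        + ((-t*x - z^2*w^4/4 + (a3/2)*z*w^3 + (1/4)*(2*t*z^2-a3^2)*w^2
            - (1/2)*((a3+1)*t-1)*z*w - t^2*z^2/4)/t^2)
      from funext fun s => by simp only [HC3]; ring]
  rw [deriv_quartic]; ring

theorem pdZ_HC3 :
    pdZ (HC3 a0 a1 a2 a3) t x y z w
      = (-z*w^4/2 + (a3/2)*w^3 + t*z*w^2 - ((a3+1)*t-1)*w/2 - t^2*z/2
          + (x*y-a1)*y*w)/t^2 := by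
  unfold pdZ
  rw [show (fun s => HC3 a0 a1 a2 a3 t x y s w)
      = fun s => 0*s^4 + 0*s^3 + ((-w^4/4 + t*w^2/2 - t^2/4)/t^2)*s^2
        + (((a3/2)*w^3 - (1/2)*((a3+1)*t-1)*w + (x*y-a1)*y*w)/t^2)*s
        + ((x^2*y^3 - (t*x+2*a1+a2+a3)*x*y^2 - ((a0*t-1)*x - a1*(a1+a2+a3))*y
            - t*x - a3^2*w^2/4)/t^2)
      from funext fun s => by simp only [HC3]; ring]
  rw [deriv_quartic]; ring

theorem pdW_HC3 :
    pdW (HC3 a0 a1 a2 a3) t x y z w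
      = (-z^2*w^3 + (3*a3/2)*z*w^2 + (1/2)*(2*t*z^2-a3^2)*w
          - (1/2)*((a3+1)*t-1)*z + (x*y-a1)*y*z)/t^2 := by
  unfold pdW
  rw [show (fun s => HC3 a0 a1 a2 a3 t x y z s)
      = fun s => ((-z^2/4)/t^2)*s^4 + (((a3/2)*z)/t^2)*s^3
        + (((1/4)*(2*t*z^2 - a3^2))/t^2)*s^2
        + ((-(1/2)*((a3+1)*t-1)*z + (x*y-a1)*y*z)/t^2)*s
        + ((x^2*y^3 - (t*x+2*a1+a2+a3)*x*y^2 - ((a0*t-1)*x - a1*(a1+a2+a3))*y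
            - t*x - t^2*z^2/4)/t^2)
      from funext fun s => by simp only [HC3]; ring]
  rw [deriv_quartic]; ring

end PartialDerivatives

namespace IsSol

variable {a0 a1 a2 a3 : ℂ} {U : Set ℂ} {x y z w : ℂ → ℂ}

theorem backlund_s0 (hsol : IsSol (HC3 a0 a1 a2 a3) U x y z w)
    (hU0 : ∀ t ∈ U, t ≠ 0) (hy : ∀ t ∈ U, y t ≠ 0) :
    IsSol (HC3 (-a0) (a1+a0) a2 a3) ((fun t => -t) '' U)
        (fun T => -(x (-T) + a0/(y (-T)) + 1/(y (-T))^2))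
        (fun T => -(y (-T)))
        (fun T => I * z (-T))
        (fun T => w (-T) / I) := by
  rintro _ ⟨t, ht, rfl⟩
  obtain ⟨dx, dy, dz, dw⟩ := hsol t ht
  have ht0 := hU0 t ht
  have hyt := hy t ht
  have hyt' : y (-(-t)) ≠ 0 := by rwa [neg_neg]
  have dxr := dx.comp_neg
  have dyr := dy.comp_neg
  refine ⟨(((dxr.add ((hasDerivAt_const _ a0).div dyr hyt')).add
      ((hasDerivAt_const _ 1).div (dyr.fun_pow 2) (pow_ne_zero 2 hyt'))).neg).congr_deriv ?_,
    dyr.neg.congr_deriv ?_, (dz.comp_neg.const_mul I).congr_deriv ?_,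
    (dw.comp_neg.div_const I).congr_deriv ?_⟩
    <;> simp only [neg_neg, pdX_HC3, pdY_HC3, pdZ_HC3, pdW_HC3]
    <;> field_simp <;> ring_nf <;> simp only [I_sq, I_pow_four] <;> ring

theorem backlund_s1 (hsol : IsSol (HC3 a0 a1 a2 a3) U x y z w)
    (hU0 : ∀ t ∈ U, t ≠ 0) (hx : ∀ t ∈ U, x t ≠ 0) :
    IsSol (HC3 (a0+2*a1) (-a1) (a2+a1) a3) U x (fun t => y t - a1/(x t)) z w := by
  intro t ht
  obtain ⟨dx, dy, dz, dw⟩ := hsol t ht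
  have ht0 := hU0 t ht
  have hxt := hx t ht
  simp only [pdX_HC3, pdY_HC3, pdZ_HC3, pdW_HC3] at *
  refine ⟨dx.congr_deriv ?_, (dy.sub ((hasDerivAt_const t a1).div dx hxt)).congr_deriv ?_,
    dz.congr_deriv ?_, dw.congr_deriv ?_⟩ <;> field_simp <;> ring

theorem backlund_s2 (hsol : IsSol (HC3 a0 a1 a2 a3) U x y z w)
    (hrel : a0 + 2*a1 + 2*a2 + a3 = 1)
    (hU0 : ∀ t ∈ U, t ≠ 0) (hD : ∀ t ∈ U, y t + (w t)^2 - t ≠ 0) :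
    IsSol (HC3 a0 (a1+a2) (-a2) (a3+2*a2)) U
        (fun t => x t + a2/(y t + (w t)^2 - t)) y
        (fun t => z t + 2*a2*(w t)/(y t + (w t)^2 - t)) w := by
  obtain rfl : a0 = 1 - 2*a1 - 2*a2 - a3 := by linear_combination hrel
  intro t ht
  obtain ⟨dx, dy, dz, dw⟩ := hsol t ht
  have ht0 := hU0 t ht
  have hDt := hD t ht
  -- stated pointwise: on the unreduced function produced by `add`/`sub`, `field_simp` overflows
  have dD : HasDerivAt (fun s => y s + w s ^ 2 - s) _ t :=
    (dy.add (dw.fun_pow 2)).sub (hasDerivAt_id' t)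
  simp only [pdX_HC3, pdY_HC3, pdZ_HC3, pdW_HC3] at *
  refine ⟨(dx.add ((hasDerivAt_const t a2).div dD hDt)).congr_deriv ?_, dy.congr_deriv ?_,
    (dz.add ((dw.const_mul (2 * a2)).div dD hDt)).congr_deriv ?_,
    dw.congr_deriv ?_⟩ <;> field_simp <;> ring

theorem backlund_s3 (hsol : IsSol (HC3 a0 a1 a2 a3) U x y z w)
    (hU0 : ∀ t ∈ U, t ≠ 0) (hz : ∀ t ∈ U, z t ≠ 0) :
    IsSol (HC3 a0 a1 (a2+a3) (-a3)) U x y z (fun t => w t - a3/(z t)) := by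
  intro t ht
  obtain ⟨dx, dy, dz, dw⟩ := hsol t ht
  have ht0 := hU0 t ht
  have hzt := hz t ht
  simp only [pdX_HC3, pdY_HC3, pdZ_HC3, pdW_HC3] at *
  refine ⟨dx.congr_deriv ?_, dy.congr_deriv ?_, dz.congr_deriv ?_,
    (dw.sub ((hasDerivAt_const t a3).div dz hzt)).congr_deriv ?_⟩ <;> field_simp <;> ring

end IsSol

theorem backlund_C3_general (a0 a1 a2 a3 : ℂ)
    (hrel : a0 + 2*a1 + 2*a2 + a3 = 1)
    (U : Set ℂ) (hU0 : ∀ t ∈ U, t ≠ 0)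
    (x y z w : ℂ → ℂ)
    (hsol : IsSol (HC3 a0 a1 a2 a3) U x y z w) :
    -- S0 : the transformed functions are functions of the new time T = −t
    ((∀ t ∈ U, y t ≠ 0) →
      IsSol (HC3 (-a0) (a1+a0) a2 a3) ((fun t => -t) '' U)
        (fun T => -(x (-T) + a0/(y (-T)) + 1/(y (-T))^2))
        (fun T => -(y (-T)))
        (fun T => I * z (-T))
        (fun T => w (-T) / I)) ∧
    -- S1
    ((∀ t ∈ U, x t ≠ 0) →
      IsSol (HC3 (a0+2*a1) (-a1) (a2+a1) a3) U
        x (fun t => y t - a1/(x t)) z w) ∧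
    -- S2
    ((∀ t ∈ U, y t + (w t)^2 - t ≠ 0) →
      IsSol (HC3 a0 (a1+a2) (-a2) (a3+2*a2)) U
        (fun t => x t + a2/(y t + (w t)^2 - t)) y
        (fun t => z t + 2*a2*(w t)/(y t + (w t)^2 - t)) w) ∧
    -- S3
    ((∀ t ∈ U, z t ≠ 0) →
      IsSol (HC3 a0 a1 (a2+a3) (-a3)) U
        x y z (fun t => w t - a3/(z t))) :=
  ⟨hsol.backlund_s0 hU0, hsol.backlund_s1 hU0, hsol.backlund_s2 hrel hU0, hsol.backlund_s3 hU0⟩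

theorem backlund_C3 (a0 a1 a2 a3 : ℂ)
    (hrel : a0 + 2*a1 + 2*a2 + a3 = 1)
    (U : Set ℂ) (hU : IsOpen U) (hU0 : ∀ t ∈ U, t ≠ 0)
    (x y z w : ℂ → ℂ)
    (hsol : IsSol (HC3 a0 a1 a2 a3) U x y z w) :
    -- S0 : the transformed functions are functions of the new time T = −t
    ((∀ t ∈ U, y t ≠ 0) →
      IsSol (HC3 (-a0) (a1+a0) a2 a3) ((fun t => -t) '' U)
        (fun T => -(x (-T) + a0/(y (-T)) + 1/(y (-T))^2))
        (fun T => -(y (-T)))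
        (fun T => I * z (-T))
        (fun T => w (-T) / I)) ∧
    -- S1
    ((∀ t ∈ U, x t ≠ 0) →
      IsSol (HC3 (a0+2*a1) (-a1) (a2+a1) a3) U
        x (fun t => y t - a1/(x t)) z w) ∧
    -- S2
    ((∀ t ∈ U, y t + (w t)^2 - t ≠ 0) →
      IsSol (HC3 a0 (a1+a2) (-a2) (a3+2*a2)) U
        (fun t => x t + a2/(y t + (w t)^2 - t)) y
        (fun t => z t + 2*a2*(w t)/(y t + (w t)^2 - t)) w) ∧
    -- S3
    ((∀ t ∈ U, z t ≠ 0) →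
      IsSol (HC3 a0 a1 (a2+a3) (-a3)) U
        x y z (fun t => w t - a3/(z t))) :=
  backlund_C3_general a0 a1 a2 a3 hrel U hU0 x y z w hsol
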